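/- Let n ≥ 1, let M and N be connected topological n-manifolds, each equipped with a metric inducing its topology, let f : M → N be a branched cover, let x ∈ M and r > 0, and set U = U_f(x,r). Assume that f(∂U) = ∂(f(U)) and that the ball B_N(f(x), r) is connected. Then f(U) = B_N(f(x), r). -/
import Mathlib


open Metric Set Filter Topology

/-- A topological `n`-manifold structure on a space: every point has an open
neighborhood homeomorphic to `ℝⁿ` (Hausdorffness and second countability are
carried as typeclass assumptions). -/
def IsTopNManifold (n : ℕ) (M : Type*) [TopologicalSpace M] : Prop :=
  ∀ x : M, ∃ U : Set M, IsOpen U ∧ x ∈ U ∧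
    Nonempty (U ≃ₜ EuclideanSpace ℝ (Fin n))

/-- A branched cover: a continuous, open, discrete map. Discreteness means that
no fiber `f⁻¹{y}` has an accumulation point. -/
def IsBranchedCover {M N : Type*} [TopologicalSpace M] [TopologicalSpace N]
    (f : M → N) : Prop :=
  Continuous f ∧ IsOpenMap f ∧
    ∀ y : N, ∀ x : M, ¬ AccPt x (Filter.principal (f ⁻¹' {y}))

/-- `U_f(x, r)`: the connected component of `x` in `f⁻¹(B(f(x), r))`. -/
def normalComp {M N : Type*} [MetricSpace M] [MetricSpace N]
    (f : M → N) (x : M) (r : ℝ) : Set M :=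
  connectedComponentIn (f ⁻¹' Metric.ball (f x) r) x

/-- A topological `n`-manifold is locally connected. -/
lemma IsTopNManifold.locallyConnectedSpace {n : ℕ} {M : Type*} [TopologicalSpace M]
    (hM : IsTopNManifold n M) : LocallyConnectedSpace M := by
  rw [locallyConnectedSpace_iff_subsets_isOpen_isConnected]
  intro x W hW
  obtain ⟨U, hUo, hxU, ⟨h⟩⟩ := hM x
  haveI : LocallyConnectedSpace U := h.locallyConnectedSpace
  have he := hUo.isOpenEmbedding_subtypeVal
  have hW' : (Subtype.val ⁻¹' W : Set U) ∈ 𝓝 (⟨x, hxU⟩ : U) :=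
    he.continuous.continuousAt.preimage_mem_nhds hW
  obtain ⟨V, hVW, hVo, hxV, hVc⟩ :=
    locallyConnectedSpace_iff_subsets_isOpen_isConnected.mp ‹_› (⟨x, hxU⟩ : U) _ hW'
  exact ⟨Subtype.val '' V, image_subset_iff.mpr hVW, he.isOpenMap V hVo,
    ⟨⟨x, hxU⟩, hxV, rfl⟩, hVc.image _ he.continuous.continuousOn⟩

/-- The closure of a connected component within `F`, intersected with `F`, is the component. -/
lemma closure_connectedComponentIn_inter {M : Type*} [TopologicalSpace M]
    {F : Set M} {x : M} (hx : x ∈ F) :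
    closure (connectedComponentIn F x) ∩ F ⊆ connectedComponentIn F x := by
  rintro y ⟨hyc, hyF⟩
  rw [connectedComponentIn_eq_image hx] at hyc ⊢
  have h1 : (⟨y, hyF⟩ : F) ∈ closure (connectedComponent (⟨x, hx⟩ : F)) := by
    rw [IsEmbedding.subtypeVal.closure_eq_preimage_closure_image]
    exact hyc
  exact ⟨⟨y, hyF⟩, isClosed_connectedComponent.closure_subset h1, rfl⟩

/-- **The image of a normal component is the corresponding ball.**
If `f : M → N` is a branched cover between connected metric topological `n`-manifolds,
`U = U_f(x,r)`, `f(∂U) = ∂(f(U))`, and the ball `B(f(x), r)` is connected, then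
`f(U) = B(f(x), r)`. -/
theorem image_of_normal_component {n : ℕ} (hn : 1 ≤ n)
    {M N : Type*} [MetricSpace M] [MetricSpace N]
    [SecondCountableTopology M] [SecondCountableTopology N]
    [ConnectedSpace M] [ConnectedSpace N]
    (hM : IsTopNManifold n M) (hN : IsTopNManifold n N)
    {f : M → N} (hf : IsBranchedCover f) (x : M) (r : ℝ) (hr : 0 < r)
    (hnormal : f '' frontier (normalComp f x r) = frontier (f '' normalComp f x r))
    (hball : IsConnected (Metric.ball (f x) r)) :
    f '' normalComp f x r = Metric.ball (f x) r := by
  haveI : LocallyConnectedSpace M := hM.locallyConnectedSpace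
  set U := normalComp f x r with hU
  have hs : IsOpen (f ⁻¹' Metric.ball (f x) r) := isOpen_ball.preimage hf.1
  have hxs : x ∈ f ⁻¹' Metric.ball (f x) r := by
    simp [Metric.mem_ball_self hr]
  have hUo : IsOpen U := hs.connectedComponentIn
  have hxU : x ∈ U := mem_connectedComponentIn hxs
  have hUsub : U ⊆ f ⁻¹' Metric.ball (f x) r := connectedComponentIn_subset _ _
  have himsub : f '' U ⊆ Metric.ball (f x) r := image_subset_iff.mpr hUsub
  have himo : IsOpen (f '' U) := hf.2.1 U hUo
  -- the frontier of U is disjoint from f⁻¹(ball)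
  have hfr : ∀ y ∈ frontier U, f y ∉ Metric.ball (f x) r := by
    intro y hy hfy
    have hyU : y ∈ U := closure_connectedComponentIn_inter hxs ⟨hy.1, hfy⟩
    exact (hUo.frontier_eq ▸ hy).2 hyU
  -- hence frontier (f '' U) is disjoint from the ball
  have hdisj : ∀ y ∈ Metric.ball (f x) r, y ∉ frontier (f '' U) := by
    intro y hy hyf
    rw [← hnormal] at hyf
    obtain ⟨z, hz, rfl⟩ := hyf
    exact hfr z hz hy
  -- the ball is covered by the open sets f '' U and (closure (f '' U))ᶜ
  have hcov : Metric.ball (f x) r ⊆ f '' U ∪ (closure (f '' U))ᶜ := by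
    intro y hy
    by_cases hyc : y ∈ closure (f '' U)
    · left
      by_contra hyU
      exact hdisj y hy ⟨hyc, fun h => hyU (himo.interior_eq ▸ h)⟩
    · right; exact hyc
  have hsub : Metric.ball (f x) r ⊆ f '' U := by
    refine hball.isPreconnected.subset_left_of_subset_union himo
      isClosed_closure.isOpen_compl ?_ hcov ⟨f x, Metric.mem_ball_self hr, ⟨x, hxU, rfl⟩⟩
    exact disjoint_compl_right.mono_right (compl_subset_compl.mpr subset_closure)
  exact himsub.antisymm hsub
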